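/- Let A_1 and A_2 be finite idempotent algebras of the same signature, a,b ∈ A_1, and c,d ∈ A_2. Let θ be a congruence of Sg{c,d} in A_2 such that d ∈ Sg{c, d′} for every d′ ∈ d^θ. Let h be a ternary term of the common signature such that h^{A_1}(b,a,a) = b and h^{A_2}(c,c,d) θ d. Then there exists a ternary term h′ such that h′^{A_1}(b,a,a) = b and h′^{A_2}(c,c,d) = d. -/

import Mathlib

namespace UA

/-- Terms over a signature `(ι, ar)` with `n` variables. -/
inductive Term (ι : Type) (ar : ι → ℕ) (n : ℕ) : Type where
  | var : Fin n → Term ι ar n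
  | app : (i : ι) → (Fin (ar i) → Term ι ar n) → Term ι ar n

/-- Evaluation of a term in an algebra with operations `ops`. -/
def Term.eval {ι : Type} {ar : ι → ℕ} {A : Type} (ops : ∀ i : ι, (Fin (ar i) → A) → A)
    {n : ℕ} : Term ι ar n → (Fin n → A) → A
  | .var j, x => x j
  | .app i ts, x => ops i fun k => Term.eval ops (ts k) x

variable {ι : Type} {ar : ι → ℕ} {A : Type}

/-- An algebra is idempotent if every basic operation is. -/
def Idempotent (ops : ∀ i : ι, (Fin (ar i) → A) → A) : Prop :=
  ∀ (i : ι) (x : A), ops i (fun _ => x) = x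

/-- A subuniverse: a subset closed under all basic operations. -/
def IsSubuniverse (ops : ∀ i : ι, (Fin (ar i) → A) → A) (S : Set A) : Prop :=
  ∀ (i : ι) (xs : Fin (ar i) → A), (∀ k, xs k ∈ S) → ops i xs ∈ S

/-- The subuniverse generated by `X`. -/
def Sg (ops : ∀ i : ι, (Fin (ar i) → A) → A) (X : Set A) : Set A :=
  ⋂₀ {S | IsSubuniverse ops S ∧ X ⊆ S}

/-- A tolerance: a reflexive symmetric compatible binary relation. -/
def IsTolerance (ops : ∀ i : ι, (Fin (ar i) → A) → A) (τ : A → A → Prop) : Prop :=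
  (∀ x, τ x x) ∧ (∀ x y, τ x y → τ y x) ∧
  ∀ (i : ι) (xs ys : Fin (ar i) → A), (∀ k, τ (xs k) (ys k)) → τ (ops i xs) (ops i ys)

/-- A congruence: a compatible equivalence relation. -/
def IsCongruence (ops : ∀ i : ι, (Fin (ar i) → A) → A) (θ : A → A → Prop) : Prop :=
  Equivalence θ ∧
  ∀ (i : ι) (xs ys : Fin (ar i) → A), (∀ k, θ (xs k) (ys k)) → θ (ops i xs) (ops i ys)

/-- A congruence of the subalgebra with universe `B`, viewed as a partial
equivalence relation on the big algebra whose domain is exactly `B` and which is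
compatible with all operations. -/
def IsCongruenceOn (ops : ∀ i : ι, (Fin (ar i) → A) → A) (B : Set A)
    (θ : A → A → Prop) : Prop :=
  (∀ x y, θ x y → x ∈ B ∧ y ∈ B) ∧
  (∀ x ∈ B, θ x x) ∧
  (∀ x y, θ x y → θ y x) ∧
  (∀ x y z, θ x y → θ y z → θ x z) ∧
  ∀ (i : ι) (xs ys : Fin (ar i) → A), (∀ k, θ (xs k) (ys k)) → θ (ops i xs) (ops i ys)

/-- `f` is a binary term operation of the algebra. -/
def IsTermOp2 (ops : ∀ i : ι, (Fin (ar i) → A) → A) (f : A → A → A) : Prop :=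
  ∃ t : Term ι ar 2, ∀ x y, f x y = t.eval ops ![x, y]

/-- `g` is a ternary term operation of the algebra. -/
def IsTermOp3 (ops : ∀ i : ι, (Fin (ar i) → A) → A) (g : A → A → A → A) : Prop :=
  ∃ t : Term ι ar 3, ∀ x y z, g x y z = t.eval ops ![x, y, z]

/-- Connectivity of `a` and `b` in the hypergraph `H(A)` whose hyperedges are the
nonempty proper subuniverses: a chain of hyperedges with consecutive ones
intersecting, the first containing `a`, the last containing `b`. -/
def HConnected (ops : ∀ i : ι, (Fin (ar i) → A) → A) (a b : A) : Prop :=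
  ∃ L : List (Set A),
    (∀ S ∈ L, IsSubuniverse ops S ∧ S.Nonempty ∧ S ≠ Set.univ) ∧
    L.Chain' (fun S T => (S ∩ T).Nonempty) ∧
    ∃ h : L ≠ [], a ∈ L.head h ∧ b ∈ L.getLast h


/-
If `e := h(c, c, d)`, then `e θ d`, so `d ∈ Sg {c, e}` and `d = s(c, e)` for a binary term `s`.
Take `h'(x, y, z) := s(x, h(x, y, z))`: in `A1` it gives `s(b, b) = b` by idempotency.
-/

def Term.subst {m n : ℕ} : Term ι ar m → (Fin m → Term ι ar n) → Term ι ar n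
  | .var j, σ => σ j
  | .app i ts, σ => .app i fun k => (ts k).subst σ

theorem Term.eval_subst (ops : ∀ i : ι, (Fin (ar i) → A) → A) {m n : ℕ}
    (t : Term ι ar m) (σ : Fin m → Term ι ar n) (x : Fin n → A) :
    (t.subst σ).eval ops x = t.eval ops fun j => (σ j).eval ops x := by
  induction t with
  | var j => rfl
  | app i ts ih => simp only [Term.subst, Term.eval, ih]

theorem Term.eval_subst_pair (ops : ∀ i : ι, (Fin (ar i) → A) → A) {n : ℕ}
    (t : Term ι ar 2) (u v : Term ι ar n) (x : Fin n → A) :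
    (t.subst ![u, v]).eval ops x = t.eval ops ![u.eval ops x, v.eval ops x] := by
  rw [Term.eval_subst]
  congr 1
  funext j
  fin_cases j <;> rfl

theorem Term.eval_eq_of_idempotent {ops : ∀ i : ι, (Fin (ar i) → A) → A}
    (hid : Idempotent ops) {n : ℕ} (t : Term ι ar n) {x : Fin n → A} {a : A}
    (hx : ∀ j, x j = a) : t.eval ops x = a := by
  induction t with
  | var j => exact hx j
  | app i ts ih => simp only [Term.eval, ih]; exact hid i a

theorem exists_term_eval_eq_of_mem_Sg (ops : ∀ i : ι, (Fin (ar i) → A) → A) {n : ℕ}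
    (x : Fin n → A) {v : A} (hv : v ∈ Sg ops (Set.range x)) :
    ∃ t : Term ι ar n, t.eval ops x = v := by
  refine hv {v | ∃ t : Term ι ar n, t.eval ops x = v} ⟨fun i xs hxs => ?_, ?_⟩
  · choose ts hts using hxs
    exact ⟨.app i ts, by simp only [Term.eval, hts]⟩
  · rintro _ ⟨j, rfl⟩
    exact ⟨.var j, rfl⟩

theorem exists_term_eval_eq_of_mem_Sg_pair (ops : ∀ i : ι, (Fin (ar i) → A) → A)
    {x y v : A} (hv : v ∈ Sg ops ({x, y} : Set A)) :
    ∃ t : Term ι ar 2, t.eval ops ![x, y] = v :=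
  exists_term_eval_eq_of_mem_Sg ops ![x, y] (by rwa [Matrix.range_cons_cons_empty])

theorem stmt_16_general {ι : Type} {ar : ι → ℕ} {A1 A2 : Type}
    (ops1 : ∀ i : ι, (Fin (ar i) → A1) → A1)
    (ops2 : ∀ i : ι, (Fin (ar i) → A2) → A2)
    (hid1 : Idempotent ops1)
    (a b : A1) (c d : A2)
    (θ : A2 → A2 → Prop)
    (hθ : IsCongruenceOn ops2 (Sg ops2 ({c, d} : Set A2)) θ)
    (hgen : ∀ d', θ d d' → d ∈ Sg ops2 ({c, d'} : Set A2))
    (h : Term ι ar 3)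
    (h1 : h.eval ops1 ![b, a, a] = b)
    (h2 : θ (h.eval ops2 ![c, c, d]) d) :
    ∃ h' : Term ι ar 3,
      h'.eval ops1 ![b, a, a] = b ∧ h'.eval ops2 ![c, c, d] = d := by
  obtain ⟨s, hs⟩ := exists_term_eval_eq_of_mem_Sg_pair ops2 (hgen _ (hθ.2.2.1 _ _ h2))
  refine ⟨s.subst ![.var 0, h], ?_, ?_⟩
  · rw [Term.eval_subst_pair, h1]
    exact s.eval_eq_of_idempotent hid1 (Fin.forall_fin_two.2 ⟨rfl, rfl⟩)
  · rwa [Term.eval_subst_pair]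

/-- interpolation of affine-style behaviour of a term across two
similar algebras (Lemma on thin affine pairs). -/
theorem stmt_16 {ι : Type} {ar : ι → ℕ} {A1 A2 : Type}
    [Fintype A1] [Nonempty A1] [Fintype A2] [Nonempty A2]
    (ops1 : ∀ i : ι, (Fin (ar i) → A1) → A1)
    (ops2 : ∀ i : ι, (Fin (ar i) → A2) → A2)
    (hid1 : Idempotent ops1) (hid2 : Idempotent ops2)
    (a b : A1) (c d : A2)
    (θ : A2 → A2 → Prop)
    (hθ : IsCongruenceOn ops2 (Sg ops2 ({c, d} : Set A2)) θ)
    (hgen : ∀ d', θ d d' → d ∈ Sg ops2 ({c, d'} : Set A2))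
    (h : Term ι ar 3)
    (h1 : h.eval ops1 ![b, a, a] = b)
    (h2 : θ (h.eval ops2 ![c, c, d]) d) :
    ∃ h' : Term ι ar 3,
      h'.eval ops1 ![b, a, a] = b ∧ h'.eval ops2 ![c, c, d] = d :=
  stmt_16_general ops1 ops2 hid1 a b c d θ hθ hgen h h1 h2

end UA
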